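/- arXiv:2208.11616 — 3 statements merged into one kernel-verified Lean document; each statement's English description precedes it below -/
import Mathlib

section
/- If S ⊆ ℕ contains 0 and has positive Schnirelmann density, then S is an additive basis of finite order; that is, there exists h ≥ 1 such that every natural number is a sum of h elements of S. -/
/-!
Iterating Schnirelmann's inequality `σ(A + B) ≥ σ(A) + σ(B) - σ(A) σ(B)` (for `0 ∈ A, B`) gives
`1 - σ(k • S) ≤ (1 - σ(S)) ^ k`, so for large `k` the set `k • S` has density at least `1 / 2`.
Two sets containing `0` whose densities add up to at least `1` have sumset `ℕ`, hence
`(2 * k) • S = k • S + k • S = ℕ`.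
-/

open Finset Pointwise

def counting (A : Set ℕ) [DecidablePred (· ∈ A)] (n : ℕ) : ℕ := #{a ∈ Ioc 0 n | a ∈ A}

section Counting

variable {A : Set ℕ} [DecidablePred (· ∈ A)]

lemma counting_add_card_filter_Ioc {a n : ℕ} (h : a ≤ n) :
    counting A a + #{m ∈ Ioc a n | m ∈ A} = counting A n := by
  rw [counting, counting, ← card_union_of_disjoint, ← filter_union,
    Ioc_union_Ioc_eq_Ioc (Nat.zero_le a) h]
  exact disjoint_filter_filter (Ioc_disjoint_Ioc_of_le le_rfl)

lemma counting_add_one_of_mem {n : ℕ} (h : n + 1 ∈ A) : counting A (n + 1) = counting A n + 1 := by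
  rw [← counting_add_card_filter_Ioc (Nat.le_succ n), Nat.Ioc_succ_singleton, filter_singleton,
    if_pos h, card_singleton]

lemma counting_eq_of_forall_notMem {a n : ℕ} (h : a ≤ n) (hgap : ∀ m ∈ Ioc a n, m ∉ A) :
    counting A n = counting A a := by
  rw [← counting_add_card_filter_Ioc h, filter_false_of_mem hgap, card_empty, add_zero]

end Counting

lemma exists_mem_le_forall_Ioc_notMem {A : Set ℕ} [DecidablePred (· ∈ A)] (hA : 0 ∈ A) (n : ℕ) :
    ∃ a ∈ A, a ≤ n ∧ ∀ m ∈ Ioc a n, m ∉ A :=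
  ⟨_, Nat.findGreatest_spec (Nat.zero_le n) hA, Nat.findGreatest_le n,
    fun _ hm ↦ Nat.findGreatest_is_greatest (mem_Ioc.1 hm).1 (mem_Ioc.1 hm).2⟩

section Sumset

variable {A B : Set ℕ} [DecidablePred (· ∈ B)] [DecidablePred (· ∈ A + B)]

lemma counting_add_counting_le {a n : ℕ} (ha : a ∈ A) (h : a ≤ n) :
    counting (A + B) a + counting B (n - a) ≤ counting (A + B) n := by
  rw [← counting_add_card_filter_Ioc (A := A + B) h, counting]
  gcongr
  refine card_le_card_of_injOn (a + ·) ?_ (add_right_injective a).injOn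
  intro b hb
  simp only [coe_filter, mem_Ioc, Set.mem_ofPred_eq] at hb ⊢
  exact ⟨⟨by omega, by omega⟩, Set.add_mem_add ha hb.2⟩

variable [DecidablePred (· ∈ A)]

/-- If `n ∉ A`, the gap of `A` ending at `n` starts at some `a ∈ A`,
and `a + B` fills it with density at least `σ(B)`. -/
theorem counting_add_mul_le_counting_add (hA : 0 ∈ A) (hB : 0 ∈ B) (n : ℕ) :
    counting A n + schnirelmannDensity B * (n - counting A n) ≤ counting (A + B) n := by
  induction n using Nat.strong_induction_on with
  | _ n ih =>
  rcases n with _ | n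
  · simp [counting]
  by_cases hn : n + 1 ∈ A
  · have hAB : n + 1 ∈ A + B := ⟨n + 1, hn, 0, hB, rfl⟩
    rw [counting_add_one_of_mem hn, counting_add_one_of_mem hAB]
    push_cast
    linarith [ih n n.lt_succ_self]
  obtain ⟨a, haA, han, hgap⟩ := exists_mem_le_forall_Ioc_notMem hA (n + 1)
  have han : a < n + 1 := han.lt_of_ne fun h ↦ hn (h ▸ haA)
  have hB_le : schnirelmannDensity B * (n + 1 - a : ℕ) ≤ counting B (n + 1 - a) :=
    schnirelmannDensity_mul_le_card_filter
  have hfill : (counting (A + B) a : ℝ) + counting B (n + 1 - a) ≤ counting (A + B) (n + 1) := by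
    exact_mod_cast counting_add_counting_le haA han.le
  rw [counting_eq_of_forall_notMem han.le hgap]
  rw [Nat.cast_sub han.le] at hB_le
  push_cast at hB_le ⊢
  linarith [ih a han]

theorem schnirelmannDensity_add_sub_mul_le (hA : 0 ∈ A) (hB : 0 ∈ B) :
    schnirelmannDensity A + schnirelmannDensity B -
      schnirelmannDensity A * schnirelmannDensity B ≤ schnirelmannDensity (A + B) := by
  refine le_schnirelmannDensity_iff.2 fun n hn ↦ (le_div_iff₀ (by exact_mod_cast hn)).2 ?_
  have hcount := counting_add_mul_le_counting_add hA hB n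
  have hσA : schnirelmannDensity A * n ≤ counting A n := schnirelmannDensity_mul_le_card_filter
  have hσB : schnirelmannDensity B ≤ 1 := schnirelmannDensity_le_one
  change _ ≤ (counting (A + B) n : ℝ)
  nlinarith [mul_nonneg (sub_nonneg.2 hσB) (sub_nonneg.2 hσA)]

end Sumset

open scoped Classical in
theorem one_sub_pow_le_schnirelmannDensity_nsmul {S : Set ℕ} [DecidablePred (· ∈ S)]
    (hS : 0 ∈ S) : ∀ k : ℕ, 1 - (1 - schnirelmannDensity S) ^ k ≤ schnirelmannDensity (k • S)
  | 0 => by simpa using schnirelmannDensity_nonneg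
  | k + 1 => by
    have ih := one_sub_pow_le_schnirelmannDensity_nsmul hS k
    have hstep := schnirelmannDensity_add_sub_mul_le (Set.zero_mem_nsmul (n := k) hS) hS
    have hσ : schnirelmannDensity S ≤ 1 := schnirelmannDensity_le_one
    rw [schnirelmannDensity_congr (succ_nsmul S k), pow_succ]
    nlinarith [mul_le_mul_of_nonneg_right (sub_le_sub_left ih 1) (sub_nonneg.2 hσ)]

theorem exists_nsmul_eq_univ_of_pos_schnirelmannDensity {S : Set ℕ} [DecidablePred (· ∈ S)]
    (hS : 0 ∈ S) (hσ : 0 < schnirelmannDensity S) : ∃ h ≠ 0, h • S = Set.univ := by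
  classical
  obtain ⟨k, hk⟩ := exists_pow_lt_of_lt_one (by norm_num : (0 : ℝ) < 1 / 2)
    (by linarith : 1 - schnirelmannDensity S < 1)
  have hk0 : k ≠ 0 := by rintro rfl; norm_num at hk
  have hhalf := one_sub_pow_le_schnirelmannDensity_nsmul hS k
  refine ⟨k + k, by omega, ?_⟩
  rw [add_nsmul]
  exact add_eq_univ_of_one_le_schirelmannDensity_add_schnirelmannDensity
    (Set.zero_mem_nsmul hS) (Set.zero_mem_nsmul hS) (by linarith)

/-- Schnirelmann's theorem: if `S ⊆ ℕ` contains `0` and has positive Schnirelmann density,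
then `S` is an additive basis of finite order, i.e. there is `h ≥ 1` such that every natural
number is a sum of `h` elements of `S`. -/
theorem schnirelmann_basis_of_pos_density
    (S : Set ℕ) [DecidablePred (· ∈ S)]
    (h0 : 0 ∈ S) (hσ : 0 < schnirelmannDensity S) :
    ∃ h : ℕ, 1 ≤ h ∧ ∀ n : ℕ, ∃ f : Fin h → ℕ, (∀ i, f i ∈ S) ∧ ∑ i, f i = n := by
  obtain ⟨h, hh, hS⟩ := exists_nsmul_eq_univ_of_pos_schnirelmannDensity h0 hσ
  exact ⟨h, Nat.one_le_iff_ne_zero.2 hh, fun n ↦ Set.mem_nsmul_iff_sum.1 (hS ▸ Set.mem_univ n)⟩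
end

section
/- Let A be a commutative unital ℚ-algebra and T ⊆ ℚ a subset that is Diophantine over A, such that S = T ∩ ℕ has positive lower asymptotic density. Then ℚ (viewed as a subset of A) is Diophantine over A. -/
/-- A subset `S ⊆ A` is Diophantine over a commutative ring `A` if there are finitely many
polynomials `F₁,…,F_r` over `A` in one distinguished variable and `n` auxiliary variables
such that `a ∈ S` iff the system `F_j(a, y) = 0` has a solution `y ∈ Aⁿ`. -/
def IsDiophantineSet {A : Type*} [CommRing A] (S : Set A) : Prop :=
  ∃ (n r : ℕ) (F : Fin r → MvPolynomial (Option (Fin n)) A),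
    ∀ a : A, a ∈ S ↔ ∃ y : Fin n → A,
      ∀ j, MvPolynomial.eval (fun i : Option (Fin n) => i.elim a y) (F j) = 0

/-- The lower asymptotic density of a set of natural numbers. -/
noncomputable def lowerDensity (S : Set ℕ) : ℝ :=
  Filter.liminf (fun x : ℕ => (({n | n ∈ S ∧ 1 ≤ n ∧ n ≤ x}.ncard : ℝ) / x)) Filter.atTop

/-!
Positive lower density yields a bound `K` such that for every `t` some two elements of
`S = T ∩ ℕ` differ by `j * t` with `0 < j < K`: otherwise, for large `x`, the `K` translates
`S ∩ [1, x] + i * t`, `i < K`, would be disjoint subsets of `[1, x + K t]` of total size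
`≥ K δ x > x + K t`. Padding with zero
differences, every multiple of `M = K!` is a sum of `M` differences of elements of `T`. These
sums form a set `D ⊆ ℚ` containing `Mℤ`, so `a ∈ A` is rational iff `a * d₁ = d₀` for some
`d₀, d₁ ∈ D` with `d₁` invertible in `A`. As `T` is Diophantine, this condition is a
Diophantine one.
-/

open Filter Finset MvPolynomial
open scoped Nat

section Diophantine

variable {A : Type*} [CommRing A]

def IsDiophantine {ι : Type*} (S : Set (ι → A)) : Prop :=
  ∃ (κ ρ : Type) (_ : Finite κ) (_ : Finite ρ) (F : ρ → MvPolynomial (ι ⊕ κ) A),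
    S = {x | ∃ y : κ → A, ∀ j, eval (Sum.elim x y) (F j) = 0}

variable {ι : Type*}

theorem isDiophantine_zeroLocus {ρ : Type} [Finite ρ] (P : ρ → MvPolynomial ι A) :
    IsDiophantine {x : ι → A | ∀ j, eval x (P j) = 0} := by
  refine ⟨Empty, ρ, inferInstance, inferInstance, fun j => rename Sum.inl (P j), ?_⟩
  ext x
  simp [eval_rename, Sum.elim_comp_inl]

theorem IsDiophantine.iInter {σ : Type} [Finite σ] {S : σ → Set (ι → A)}
    (h : ∀ k, IsDiophantine (S k)) : IsDiophantine (⋂ k, S k) := by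
  choose κ ρ _ _ F hF using h
  refine ⟨Σ k, κ k, Σ k, ρ k, inferInstance, inferInstance,
    fun j => rename (Sum.map id (Sigma.mk j.1)) (F j.1 j.2), ?_⟩
  ext x
  simp only [Set.mem_iInter, hF, Set.mem_ofPred_eq, eval_rename, Sum.elim_comp_map,
    Function.comp_id, Sigma.forall]
  constructor
  · intro hx
    choose y hy using hx
    exact ⟨fun p => y p.1 p.2, hy⟩
  · rintro ⟨y, hy⟩ k
    exact ⟨fun c => y ⟨k, c⟩, hy k⟩

theorem IsDiophantine.inter {S₁ S₂ : Set (ι → A)} (h₁ : IsDiophantine S₁)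
    (h₂ : IsDiophantine S₂) : IsDiophantine (S₁ ∩ S₂) := by
  rw [Set.inter_eq_iInter]
  exact IsDiophantine.iInter fun b => by cases b <;> assumption

theorem IsDiophantine.reindex {ι' : Type*} {S : Set (ι → A)} (h : IsDiophantine S)
    (f : ι → ι') : IsDiophantine {x : ι' → A | x ∘ f ∈ S} := by
  obtain ⟨κ, ρ, _, _, F, rfl⟩ := h
  refine ⟨κ, ρ, inferInstance, inferInstance, fun j => rename (Sum.map f id) (F j), ?_⟩
  ext x
  simp [eval_rename, Sum.elim_comp_map]

theorem IsDiophantine.exists {κ : Type} [Finite κ] {S : Set (ι ⊕ κ → A)}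
    (h : IsDiophantine S) : IsDiophantine {x : ι → A | ∃ y : κ → A, Sum.elim x y ∈ S} := by
  obtain ⟨κ', ρ, _, _, F, rfl⟩ := h
  refine ⟨κ ⊕ κ', ρ, inferInstance, inferInstance,
    fun j => rename (Equiv.sumAssoc ι κ κ') (F j), ?_⟩
  have elim_comp_sumAssoc (x : ι → A) (y : κ → A) (z : κ' → A) :
      Sum.elim x (Sum.elim y z) ∘ Equiv.sumAssoc ι κ κ' = Sum.elim (Sum.elim x y) z := by
    ext ((i | i) | i) <;> rfl
  ext x
  simp only [Set.mem_ofPred_eq, eval_rename]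
  constructor
  · rintro ⟨y, z, hz⟩
    exact ⟨Sum.elim y z, by rwa [elim_comp_sumAssoc]⟩
  · rintro ⟨yz, hyz⟩
    refine ⟨yz ∘ Sum.inl, yz ∘ Sum.inr, ?_⟩
    rwa [← elim_comp_sumAssoc, Sum.elim_comp_inl_inr]

theorem isDiophantineSet_iff_isDiophantine (S : Set A) :
    IsDiophantineSet S ↔ IsDiophantine {x : Unit → A | x () ∈ S} := by
  constructor
  · rintro ⟨n, r, F, hF⟩
    refine ⟨Fin n, Fin r, inferInstance, inferInstance,
      fun j => rename (fun o => o.elim (Sum.inl ()) Sum.inr) (F j), ?_⟩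
    have elim_comp (x : Unit → A) (y : Fin n → A) :
        Sum.elim x y ∘ (fun o : Option (Fin n) => o.elim (Sum.inl ()) Sum.inr) =
          fun o => o.elim (x ()) y := by
      ext (_ | _) <;> rfl
    ext x
    simp only [Set.mem_ofPred_eq, eval_rename, elim_comp, hF]
  · rintro ⟨κ, ρ, _, _, F, hF⟩
    obtain ⟨n, ⟨eκ⟩⟩ := Finite.exists_equiv_fin κ
    obtain ⟨r, ⟨eρ⟩⟩ := Finite.exists_equiv_fin ρ
    refine ⟨n, r, fun j => rename (Sum.elim (fun _ => none) (some ∘ eκ)) (F (eρ.symm j)),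
      fun a => ?_⟩
    have elim_comp (y : Fin n → A) :
        (fun o : Option (Fin n) => o.elim a y) ∘ Sum.elim (fun _ : Unit => none) (some ∘ eκ)
          = Sum.elim (fun _ => a) (y ∘ eκ) := by
      ext (_ | _) <;> rfl
    have hmem : a ∈ S ↔ (fun _ => a) ∈ {x : Unit → A | x () ∈ S} := Iff.rfl
    simp only [hmem, hF, Set.mem_ofPred_eq, eval_rename, elim_comp]
    constructor
    · rintro ⟨y, hy⟩
      exact ⟨y ∘ eκ.symm, fun j => by simpa [Function.comp_assoc] using hy _⟩
    · rintro ⟨y, hy⟩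
      exact ⟨y ∘ eκ, fun j => by simpa using hy (eρ j)⟩

end Diophantine

def sumDiff {R : Type*} [AddCommGroup R] {M : ℕ} (y : Fin M → Fin 2 → R) : R :=
  ∑ i, (y i 0 - y i 1)

theorem map_sumDiff {R R' F : Type*} [AddCommGroup R] [AddCommGroup R'] [FunLike F R R']
    [AddMonoidHomClass F R R'] (f : F) {M : ℕ} (y : Fin M → Fin 2 → R) :
    f (sumDiff y) = sumDiff fun i s => f (y i s) := by
  simp only [sumDiff, map_sum, map_sub]

theorem range_algebraMap_eq_setOf_sumDiff (A : Type*) [CommRing A] [Algebra ℚ A] {T : Set ℚ}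
    {M : ℕ} (hM : 0 < M)
    (hT : ∀ z : ℤ, ∃ y : Fin M → Fin 2 → ℚ, (∀ i s, y i s ∈ T) ∧ sumDiff y = M * z) :
    Set.range (algebraMap ℚ A) = {a | ∃ (x : Fin 2 → Fin M → Fin 2 → A) (w : A),
      (∀ j i s, x j i s ∈ algebraMap ℚ A '' T) ∧
        a * sumDiff (x 1) = sumDiff (x 0) ∧ sumDiff (x 1) * w = 1} := by
  ext a
  constructor
  · rintro ⟨q, rfl⟩
    choose y hyT hy using hT
    have hd : (M * q.den : ℚ) ≠ 0 := by positivity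
    refine ⟨fun j i s => algebraMap ℚ A (y (![q.num, q.den] j) i s),
      algebraMap ℚ A (M * q.den)⁻¹, fun j i s => ⟨_, hyT _ i s, rfl⟩, ?_⟩
    simp only [← map_sumDiff, hy, ← map_mul]
    simp only [Matrix.cons_val_zero, Matrix.cons_val_one, Int.cast_natCast, mul_inv_cancel₀ hd,
      map_one, and_true]
    congr 1
    rw [mul_left_comm, Rat.mul_den_eq_num]
  · rintro ⟨x, w, hx, hx₀, hx₁⟩
    have hmem (j : Fin 2) : sumDiff (x j) ∈ (algebraMap ℚ A).range :=
      Subring.sum_mem _ fun i _ =>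
        sub_mem (Set.image_subset_range _ _ (hx j i 0)) (Set.image_subset_range _ _ (hx j i 1))
    obtain ⟨d₀, hd₀⟩ := hmem 0
    obtain ⟨d₁, hd₁⟩ := hmem 1
    rw [← hd₀, ← hd₁] at hx₀
    rw [← hd₁] at hx₁
    by_cases hd : d₁ = 0
    · rw [hd, map_zero, zero_mul] at hx₁
      have := subsingleton_of_zero_eq_one hx₁
      exact ⟨0, Subsingleton.elim _ _⟩
    · refine ⟨d₀ / d₁, (IsUnit.of_mul_eq_one w hx₁).mul_left_inj.1 ?_⟩
      rw [← map_mul, div_mul_cancel₀ _ hd, hx₀]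

theorem exists_pos_eventually_mul_le_ncard_of_lowerDensity_pos {S : Set ℕ}
    (hS : 0 < lowerDensity S) :
    ∃ δ : ℝ, 0 < δ ∧ ∀ᶠ x : ℕ in atTop, δ * x ≤ {n | n ∈ S ∧ 1 ≤ n ∧ n ≤ x}.ncard := by
  refine ⟨lowerDensity S / 2, half_pos hS, ?_⟩
  have hlt := eventually_lt_of_lt_liminf (half_lt_self hS)
    ⟨0, eventually_map.2 (Eventually.of_forall fun x => by positivity)⟩
  filter_upwards [hlt, eventually_gt_atTop 0] with x hx hx0
  rw [lt_div_iff₀ (by exact_mod_cast hx0)] at hx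
  exact hx.le

theorem exists_eq_add_mul_of_card_lt {F : Finset ℕ} {x K t : ℕ} (hF : F ⊆ range x)
    (hcard : x + K * t < K * #F) : ∃ a ∈ F, ∃ b ∈ F, ∃ j, 0 < j ∧ j < K ∧ a = b + j * t := by
  have hmaps : Set.MapsTo (fun p : ℕ × ℕ => p.2 + p.1 * t) ↑(range K ×ˢ F)
      ↑(range (x + K * t)) := by
    rintro ⟨i, s⟩ hp
    simp only [coe_product, coe_range, Set.mem_prod, Set.mem_Iio, mem_coe] at hp ⊢
    have := Nat.mul_le_mul_right t hp.1.le
    have := mem_range.1 (hF hp.2)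
    omega
  obtain ⟨⟨i, s⟩, hp, ⟨i', s'⟩, hp', hne, heq⟩ := exists_ne_map_eq_of_card_lt_of_maps_to
    (by rwa [card_product, card_range, card_range]) hmaps
  simp only [mem_product, mem_range] at hp hp' heq
  have shift {i i' s s' : ℕ} (hi : i < i') (h : s + i * t = s' + i' * t) :
      s = s' + (i' - i) * t := by
    have := Nat.mul_le_mul_right t hi.le
    rw [Nat.sub_mul]
    omega
  rcases lt_trichotomy i i' with hi | rfl | hi
  · exact ⟨s, hp.2, s', hp'.2, i' - i, by omega, by omega, shift hi heq⟩
  · exact absurd (by simpa using heq) hne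
  · exact ⟨s', hp'.2, s, hp.2, i - i', by omega, by omega, shift hi heq.symm⟩

theorem exists_bound_eq_add_mul_of_lowerDensity_pos {S : Set ℕ} (hS : 0 < lowerDensity S) :
    ∃ K, ∀ t, ∃ a ∈ S, ∃ b ∈ S, ∃ j, 0 < j ∧ j < K ∧ a = b + j * t := by
  obtain ⟨δ, hδ, hev⟩ := exists_pos_eventually_mul_le_ncard_of_lowerDensity_pos hS
  obtain ⟨K, hK⟩ := exists_nat_gt (2 / δ)
  refine ⟨K, fun t => ?_⟩
  classical
  obtain ⟨x, hx, htx⟩ := (hev.and (eventually_gt_atTop (K * t))).exists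
  set F := {n ∈ Icc 1 x | n ∈ S}
  have hFS : {n | n ∈ S ∧ 1 ≤ n ∧ n ≤ x} = (F : Set ℕ) := by
    ext n
    simp [F, and_comm]
  rw [hFS, Set.ncard_coe_finset] at hx
  have hcard : x + 1 + K * t < K * #F := by
    have hKδ : 2 < K * δ := by rwa [div_lt_iff₀ hδ] at hK
    have hx₀ : (0 : ℝ) < x := by exact_mod_cast (Nat.zero_le _).trans_lt htx
    have htx' : ((K * t + 1 : ℕ) : ℝ) ≤ x := by exact_mod_cast htx
    have : ((x + 1 + K * t : ℕ) : ℝ) < K * #F := by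
      push_cast at htx' ⊢
      calc (x : ℝ) + 1 + K * t ≤ 2 * x := by linarith
        _ < K * δ * x := mul_lt_mul_of_pos_right hKδ hx₀
        _ ≤ K * #F := by rw [mul_assoc]; gcongr
    exact_mod_cast this
  obtain ⟨a, ha, b, hb, j, hj⟩ := exists_eq_add_mul_of_card_lt
    (fun n hn => by simp [F] at hn ⊢; omega) hcard
  exact ⟨a, (mem_filter.1 ha).2, b, (mem_filter.1 hb).2, j, hj⟩

theorem exists_forall_int_sumDiff_eq_mul_of_lowerDensity_pos {S : Set ℕ} (hS : 0 < lowerDensity S) :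
    ∃ M > 0, ∀ z : ℤ, ∃ y : Fin M → Fin 2 → ℕ, (∀ i s, y i s ∈ S) ∧
      sumDiff (fun i s => (y i s : ℤ)) = M * z := by
  obtain ⟨K, hK⟩ := exists_bound_eq_add_mul_of_lowerDensity_pos hS
  refine ⟨K !, K.factorial_pos, ?_⟩
  have hnat (t : ℕ) : ∃ y : Fin K ! → Fin 2 → ℕ, (∀ i s, y i s ∈ S) ∧
      sumDiff (fun i s => (y i s : ℤ)) = K ! * t := by
    obtain ⟨a, ha, b, hb, j, hj₀, hjK, rfl⟩ := hK t
    obtain ⟨c, hc⟩ := Nat.dvd_factorial hj₀ hjK.le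
    have hcK : c ≤ K ! := hc ▸ Nat.le_mul_of_pos_left c hj₀
    refine ⟨fun i => ![if (i : ℕ) < c then b + j * t else b, b],
      fun i => Fin.forall_fin_two.2
        ⟨by dsimp only [Matrix.cons_val_zero]; split_ifs <;> assumption, hb⟩, ?_⟩
    simp only [sumDiff, Matrix.cons_val_zero, Matrix.cons_val_one,
      apply_ite (fun n : ℕ => (n : ℤ) - b), Nat.cast_add, Nat.cast_mul, add_sub_cancel_left,
      sub_self, sum_ite, sum_const_zero, add_zero, sum_const, Fin.card_filter_val_lt,
      min_eq_right hcK, nsmul_eq_mul]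
    rw [hc]
    push_cast
    ring
  intro z
  obtain ⟨t, rfl | rfl⟩ := Int.eq_nat_or_neg z
  · exact hnat t
  · obtain ⟨y, hyS, hy⟩ := hnat t
    refine ⟨fun i => ![y i 1, y i 0], fun i s => by fin_cases s <;> apply hyS, ?_⟩
    rw [mul_neg, ← hy, sumDiff, sumDiff, ← sum_neg_distrib]
    simp

/-- Let `A` be a commutative unital `ℚ`-algebra and `T ⊆ ℚ` a subset that is Diophantine
over `A` (i.e. its image in `A` is a Diophantine subset of `A`), such that `S = T ∩ ℕ` has
positive lower asymptotic density. Then `ℚ` (viewed as a subset of `A`) is Diophantine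
over `A`. -/
theorem rat_isDiophantine_of_diophantine_dense_subset
    (A : Type*) [CommRing A] [Algebra ℚ A] (T : Set ℚ)
    (hT : IsDiophantineSet {x : A | ∃ q ∈ T, algebraMap ℚ A q = x})
    (hS : 0 < lowerDensity {n : ℕ | (n : ℚ) ∈ T}) :
    IsDiophantineSet (Set.range (algebraMap ℚ A)) := by
  obtain ⟨M, hM, hMS⟩ := exists_forall_int_sumDiff_eq_mul_of_lowerDensity_pos hS
  have hMT (z : ℤ) : ∃ y : Fin M → Fin 2 → ℚ, (∀ i s, y i s ∈ T) ∧ sumDiff y = M * z := by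
    obtain ⟨y, hyS, hy⟩ := hMS z
    refine ⟨fun i s => y i s, hyS, ?_⟩
    simpa [map_sumDiff] using congrArg (Int.castRingHom ℚ) hy
  rw [range_algebraMap_eq_setOf_sumDiff A hM hMT, isDiophantineSet_iff_isDiophantine]
  rw [isDiophantineSet_iff_isDiophantine] at hT
  -- variables: `a`, the entries `x j i s ∈ T` of the two sums of differences, and `w`
  let v (j : Fin 2) (i : Fin M) (s : Fin 2) :
      MvPolynomial (Unit ⊕ ((Fin 2 × Fin M × Fin 2) ⊕ Unit)) A := X (.inr (.inl (j, i, s)))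
  let P : Bool → MvPolynomial (Unit ⊕ ((Fin 2 × Fin M × Fin 2) ⊕ Unit)) A := fun b =>
    cond b (X (.inl ()) * sumDiff (v 1) - sumDiff (v 0)) (sumDiff (v 1) * X (.inr (.inr ())) - 1)
  convert ((IsDiophantine.iInter fun k => hT.reindex fun _ => .inr (.inl k)).inter
    (isDiophantine_zeroLocus P)).exists using 1
  ext a
  simp only [Set.mem_ofPred_eq, Set.mem_inter_iff, Set.mem_iInter, Bool.forall_bool, P, cond,
    map_sub, map_mul, map_one, eval_X, map_sumDiff, v, Function.comp_apply, Sum.elim_inl,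
    Sum.elim_inr, sub_eq_zero]
  constructor
  · rintro ⟨x, w, hx, h₀, h₁⟩
    exact ⟨Sum.elim (fun k => x k.1 k.2.1 k.2.2) fun _ => w, fun k => hx _ _ _, h₁, h₀⟩
  · rintro ⟨y, hy, h₁, h₀⟩
    exact ⟨fun j i s => y (.inl (j, i, s)), y (.inr ()), fun j i s => hy (j, i, s), h₀, h₁⟩
end

section
/- Let π : X → ℙ¹ be an elliptic surface over ℂ such that X contains only finitely many rational curves, with Weierstrass equation y² = x³ + A(t)x + B(t), A, B ∈ ℂ[t]. Then for every non-constant rational function f ∈ ℂ(z), the elliptic curve E_f over ℂ(z) defined by y² = x³ + A(f(z))x + B(f(z)) has Mordell–Weil rank 0, i.e., E_f(ℂ(z)) is finite. -/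
/-!
A point `(u, v)` of `E_f(ℂ(z))` gives the rational curve `s ↦ (f(s), u(s), v(s))` on `X`, so it
suffices that only finitely many points give the same curve. Fix one such point `(u₀, v₀)`. Since
`f` is non-constant, `ℂ(z)` is algebraic over `ℂ(f)`, so `P(f, u₀) = 0` for some nonzero
`P ∈ ℂ[t][x]`. If `(u, v)` parametrizes the same curve, then `P(f(s), u(s)) = 0` for all but
finitely many `s`, hence `P(f, u) = 0`; as `f` is transcendental, `P(f, x)` is a nonzero
polynomial over `ℂ(z)`, so there are finitely many such `u`. The same argument applies to `v`.
-/
open Polynomial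

/-- A rational function is constant if it lies in the image of `RatFunc.C`. -/
def RatFuncIsConstant (f : RatFunc ℂ) : Prop := ∃ c : ℂ, f = RatFunc.C c

/-- The image in the Weierstrass surface `{(t,x,y) : y² = x³ + A(t)x + B(t)}` of the rational
map `ℙ¹ ⤏ X`, `s ↦ (t(s), u(s), v(s))`: the set of values at the points of `ℂ` where none of
the three rational functions has a pole. -/
def imageCurve (t u v : RatFunc ℂ) : Set (ℂ × ℂ × ℂ) :=
  {P | ∃ s : ℂ, t.denom.eval s ≠ 0 ∧ u.denom.eval s ≠ 0 ∧ v.denom.eval s ≠ 0 ∧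
    P = (RatFunc.eval (RingHom.id ℂ) s t, RatFunc.eval (RingHom.id ℂ) s u,
          RatFunc.eval (RingHom.id ℂ) s v)}

/-- `C` is a rational curve on the Weierstrass surface `y² = x³ + A(t)x + B(t)`: it is the
image of a non-constant rational map `ℙ¹ ⤏ X` given by a triple of rational functions
`(t(s), u(s), v(s))` satisfying the Weierstrass equation. -/
def IsRationalCurveOn (A B : Polynomial ℂ) (C : Set (ℂ × ℂ × ℂ)) : Prop :=
  ∃ t u v : RatFunc ℂ,
    ¬ (RatFuncIsConstant t ∧ RatFuncIsConstant u ∧ RatFuncIsConstant v) ∧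
    v ^ 2 = u ^ 3 + Polynomial.aeval t A * u + Polynomial.aeval t B ∧
    C = imageCurve t u v

theorem AlgHom.map_aevalAeval {R A B : Type*} [CommSemiring R] [CommSemiring A] [CommSemiring B]
    [Algebra R A] [Algebra R B] (φ : A →ₐ[R] B) (x y : A) (P : R[X][X]) :
    φ (aevalAeval x y P) = aevalAeval (φ x) (φ y) P := by
  have : φ.comp (aevalAeval x y) = aevalAeval (φ x) (φ y) :=
    algHom_ext' (by ext; simp) (by simp)
  exact congr($this P)

namespace Polynomial

theorem aevalAeval_eq_eval_map {R A : Type*} [CommSemiring R] [CommSemiring A] [Algebra R A]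
    (x y : A) (P : R[X][X]) : aevalAeval x y P = (P.map (aeval x).toRingHom).eval y := by
  induction P using Polynomial.induction_on' with
  | add P Q hP hQ => rw [map_add, hP, hQ, Polynomial.map_add, eval_add]
  | monomial n p => simp

theorem finite_setOf_aevalAeval_eq_zero {R A : Type*} [CommRing R] [CommRing A] [IsDomain A]
    [Algebra R A] {x : A} (hx : Transcendental R x) {P : R[X][X]} (hP : P ≠ 0) :
    {y : A | aevalAeval x y P = 0}.Finite := by
  simp only [aevalAeval_eq_eval_map]
  exact finite_setOfPred_isRoot <|
    (Polynomial.map_ne_zero_iff (transcendental_iff_injective.mp hx)).mpr hP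

end Polynomial

namespace RatFunc

variable {K : Type*} [Field K]

def regularAt (s : K) : Subalgebra K (RatFunc K) where
  carrier := {w | w.denom.eval s ≠ 0}
  mul_mem' {x y} hx hy h := mul_ne_zero hx hy <| by
    simpa using eval_eq_zero_of_dvd_of_eval_eq_zero (denom_mul_dvd x y) h
  add_mem' {x y} hx hy h := mul_ne_zero hx hy <| by
    simpa using eval_eq_zero_of_dvd_of_eval_eq_zero (denom_add_dvd x y) h
  algebraMap_mem' c := by simp [algebraMap_eq_C, denom_C]

noncomputable def evalRegularAt (s : K) : regularAt s →ₐ[K] K where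
  toFun w := (w : RatFunc K).eval (RingHom.id K) s
  map_one' := eval_one ..
  map_mul' x y := eval_mul (a := s) _ x.2 y.2
  map_zero' := eval_zero ..
  map_add' x y := eval_add (a := s) _ x.2 y.2
  commutes' c := by simp [algebraMap_eq_C]

theorem eventually_mem_regularAt (w : RatFunc K) : ∀ᶠ s in Filter.cofinite, w ∈ regularAt s :=
  (finite_setOfPred_isRoot w.denom_ne_zero).subset fun _ hs => not_not.mp hs

variable {s : K} {x y : RatFunc K}

theorem coe_aevalAeval_regularAt (x y : regularAt s) (P : K[X][X]) :
    (aevalAeval x y P : RatFunc K) = aevalAeval (x : RatFunc K) y P :=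
  (regularAt s).val.map_aevalAeval x y P

theorem aevalAeval_mem_regularAt (hx : x ∈ regularAt s) (hy : y ∈ regularAt s) (P : K[X][X]) :
    aevalAeval x y P ∈ regularAt s :=
  coe_aevalAeval_regularAt ⟨x, hx⟩ ⟨y, hy⟩ P ▸ SetLike.coe_mem _

theorem eval_aevalAeval (hx : x ∈ regularAt s) (hy : y ∈ regularAt s) (P : K[X][X]) :
    (aevalAeval x y P).eval (RingHom.id K) s =
      aevalAeval (x.eval (RingHom.id K) s) (y.eval (RingHom.id K) s) P := by
  rw [← coe_aevalAeval_regularAt ⟨x, hx⟩ ⟨y, hy⟩ P]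
  exact (evalRegularAt s).map_aevalAeval ⟨x, hx⟩ ⟨y, hy⟩ P

theorem aevalAeval_eval_eq_zero (hx : x ∈ regularAt s) (hy : y ∈ regularAt s) {P : K[X][X]}
    (hP : aevalAeval x y P = 0) :
    aevalAeval (x.eval (RingHom.id K) s) (y.eval (RingHom.id K) s) P = 0 := by
  rw [← eval_aevalAeval hx hy, hP, eval_zero]

theorem eq_zero_of_frequently_eval_eq_zero {w : RatFunc K}
    (h : ∃ᶠ s in Filter.cofinite, w ∈ regularAt s ∧ w.eval (RingHom.id K) s = 0) : w = 0 := by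
  by_contra hw
  refine Filter.frequently_cofinite_iff_infinite.mp h <|
    (finite_setOfPred_isRoot (num_ne_zero hw)).subset fun s ⟨hs, h0⟩ => ?_
  exact (div_eq_zero_iff.mp h0).resolve_right hs

theorem aevalAeval_eq_zero_of_frequently {P : K[X][X]}
    (h : ∃ᶠ s in Filter.cofinite, x ∈ regularAt s ∧ y ∈ regularAt s ∧
      aevalAeval (x.eval (RingHom.id K) s) (y.eval (RingHom.id K) s) P = 0) :
    aevalAeval x y P = 0 :=
  eq_zero_of_frequently_eval_eq_zero <| h.mono fun _ ⟨hx, hy, h0⟩ =>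
    ⟨aevalAeval_mem_regularAt hx hy P, (eval_aevalAeval hx hy P).trans h0⟩

open scoped IntermediateField.algebraAdjoinAdjoin in
theorem exists_aevalAeval_eq_zero {f : RatFunc K} (hf : ¬∃ c, f = C c) (u : RatFunc K) :
    ∃ P : K[X][X], P ≠ 0 ∧ aevalAeval f u P = 0 := by
  obtain ⟨p, hp, hpu⟩ := IntermediateField.isAlgebraic_adjoin_iff.mp
    ((isAlgebraic_adjoin_simple_X' f hf).isAlgebraic u)
  let e := Polynomial.algEquivOfTranscendental K f (transcendental_of_ne_C f hf)
  refine ⟨p.map e.symm.toRingHom, (Polynomial.map_ne_zero_iff e.symm.injective).mpr hp, ?_⟩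
  have he : ((aeval f).toRingHom : K[X] →+* RatFunc K).comp e.symm.toRingHom =
      algebraMap (Algebra.adjoin K {f}) (RatFunc K) := by
    ext z
    obtain ⟨q, rfl⟩ := e.surjective z
    simp [e]
  rw [aevalAeval_eq_eval_map, Polynomial.map_map, he, eval_map_algebraMap, hpu]

end RatFunc

open RatFunc

section ImageCurve

variable {f u v u₀ v₀ : RatFunc ℂ}

theorem aevalAeval_eq_zero_of_imageCurve_eq (hC : imageCurve f u v = imageCurve f u₀ v₀)
    {P Q : ℂ[X][X]} (hP : aevalAeval f u₀ P = 0) (hQ : aevalAeval f v₀ Q = 0) :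
    aevalAeval f u P = 0 ∧ aevalAeval f v Q = 0 := by
  have hcover : ∀ᶠ s in Filter.cofinite,
      f ∈ regularAt s ∧ u ∈ regularAt s ∧ v ∈ regularAt s ∧
      ∃ s', f ∈ regularAt s' ∧ u₀ ∈ regularAt s' ∧ v₀ ∈ regularAt s' ∧
        f.eval (RingHom.id ℂ) s = f.eval (RingHom.id ℂ) s' ∧
        u.eval (RingHom.id ℂ) s = u₀.eval (RingHom.id ℂ) s' ∧
        v.eval (RingHom.id ℂ) s = v₀.eval (RingHom.id ℂ) s' := by
    filter_upwards [eventually_mem_regularAt f, eventually_mem_regularAt u,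
      eventually_mem_regularAt v] with s hf hu hv
    have hmem : (f.eval (RingHom.id ℂ) s, u.eval (RingHom.id ℂ) s, v.eval (RingHom.id ℂ) s) ∈
        imageCurve f u₀ v₀ := hC ▸ ⟨s, hf, hu, hv, rfl⟩
    obtain ⟨s', hf', hu', hv', he⟩ := hmem
    simp only [Prod.mk.injEq] at he
    exact ⟨hf, hu, hv, s', hf', hu', hv', he⟩
  constructor
  · refine aevalAeval_eq_zero_of_frequently (hcover.frequently.mono ?_)
    rintro s ⟨hf, hu, -, s', hf', hu', -, hfs, hus, -⟩
    exact ⟨hf, hu, hfs ▸ hus ▸ aevalAeval_eval_eq_zero hf' hu' hP⟩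
  · refine aevalAeval_eq_zero_of_frequently (hcover.frequently.mono ?_)
    rintro s ⟨hf, -, hv, s', hf', -, hv', hfs, -, hvs⟩
    exact ⟨hf, hv, hfs ▸ hvs ▸ aevalAeval_eval_eq_zero hf' hv' hQ⟩

theorem finite_setOf_imageCurve_eq (hf : ¬ RatFuncIsConstant f) (C : Set (ℂ × ℂ × ℂ)) :
    {P : RatFunc ℂ × RatFunc ℂ | imageCurve f P.1 P.2 = C}.Finite := by
  rcases Set.eq_empty_or_nonempty {P : RatFunc ℂ × RatFunc ℂ | imageCurve f P.1 P.2 = C} with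
    hempty | ⟨⟨u₀, v₀⟩, rfl⟩
  · exact hempty ▸ Set.finite_empty
  obtain ⟨P, hP0, hP⟩ := exists_aevalAeval_eq_zero hf u₀
  obtain ⟨Q, hQ0, hQ⟩ := exists_aevalAeval_eq_zero hf v₀
  have hft := transcendental_of_ne_C f hf
  refine ((finite_setOf_aevalAeval_eq_zero hft hP0).prod
    (finite_setOf_aevalAeval_eq_zero hft hQ0)).subset ?_
  rintro ⟨u, v⟩ hC
  exact aevalAeval_eq_zero_of_imageCurve_eq hC hP hQ

end ImageCurve

theorem mordell_weil_finite_of_finitely_many_rational_curves_general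
    (A B : Polynomial ℂ)
    (hfin : {C : Set (ℂ × ℂ × ℂ) | IsRationalCurveOn A B C}.Finite)
    (f : RatFunc ℂ) (hf : ¬ RatFuncIsConstant f) :
    ({P : RatFunc ℂ × RatFunc ℂ |
        P.2 ^ 2 = P.1 ^ 3 + Polynomial.aeval f A * P.1 + Polynomial.aeval f B}).Finite := by
  refine (hfin.biUnion fun C _ => finite_setOf_imageCurve_eq hf C).subset fun P hP => ?_
  exact Set.mem_biUnion (x := imageCurve f P.1 P.2) ⟨f, P.1, P.2, fun h => hf h.1, hP, rfl⟩ rfl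

/-- Let `π : X → ℙ¹` be the elliptic surface over `ℂ` with Weierstrass equation
`y² = x³ + A(t)x + B(t)` such that `X` contains only finitely many rational curves. Then for
every non-constant rational function `f ∈ ℂ(z)`, the elliptic curve `E_f` over `ℂ(z)` defined
by `y² = x³ + A(f(z))x + B(f(z))` has Mordell–Weil rank `0`; indeed `E_f(ℂ(z))` is finite. -/
theorem mordell_weil_finite_of_finitely_many_rational_curves
    (A B : Polynomial ℂ) (hΔ : 4 * A ^ 3 + 27 * B ^ 2 ≠ 0)
    (hfin : {C : Set (ℂ × ℂ × ℂ) | IsRationalCurveOn A B C}.Finite)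
    (f : RatFunc ℂ) (hf : ¬ RatFuncIsConstant f) :
    ({P : RatFunc ℂ × RatFunc ℂ |
        P.2 ^ 2 = P.1 ^ 3 + Polynomial.aeval f A * P.1 + Polynomial.aeval f B}).Finite :=
  mordell_weil_finite_of_finitely_many_rational_curves_general A B hfin f hf
end
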